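/- Let n ∈ ℕ, N = 2^n, and let (A, α) be an admissible digit datum on n bits with associated function f. Let q₁ > 1 be an odd integer, χ a primitive Dirichlet character modulo q₁, q₀ ≥ 1 an integer with gcd(q₀, q₁) = 1, and b ∈ ℤ. Then |Σ_{0 ≤ k < N, q₀ | (k+b)} f(k) χ(k+b)| ≤ (N / (q₀ √{q₁})) · Σ_{a₀=0}^{q₀−1} Σ_{1 ≤ a₁ ≤ q₁, gcd(a₁,q₁)=1} |\hat f(a₀/q₀ + a₁/q₁)|. -/

import Mathlib

open Finset
open scoped Classical

/-- The indicator function of integers `x < 2^n` whose binary digit at position `j`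
equals `α j` for every `j ∈ A`. -/
def digitIndicator (A : Finset ℕ) (α : ℕ → ℕ) (x : ℕ) : ℕ :=
  if ∀ j ∈ A, x / 2 ^ j % 2 = α j then 1 else 0

/-- The normalized Fourier transform `\hat f(λ) = 2^{-n} ∑_{x < 2^n} f(x) e^{2πiλx}`. -/
noncomputable def fhat (n : ℕ) (A : Finset ℕ) (α : ℕ → ℕ) (lam : ℝ) : ℂ :=
  (2 ^ n : ℂ)⁻¹ * ∑ x ∈ Finset.range (2 ^ n),
    (digitIndicator A α x : ℂ) * Complex.exp (2 * Real.pi * Complex.I * lam * x)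

/-!
Detect the congruence `q₀ ∣ k + b` by the additive characters modulo `q₀`, and expand the
primitive character as `χ(m) τ(χ̄) = ∑_y χ̄(y) e(my/q₁)`. Interchanging the sums writes
`q₀ τ(χ̄)` times the twisted sum as `∑_{x,y} χ̄(y) e(bλ) ∑_k f(k) e(λk)` with
`λ = x/q₀ + y/q₁`. For primitive `χ` the Gauss sum has modulus `√q₁`, so the triangle inequality
gives the bound, only the units `y` contributing.
-/

open Complex Real ZMod

lemma Nat.filter_coprime_Icc_eq_filter_coprime_range {q : ℕ} (hq : 1 < q) :
    (Icc 1 q).filter (fun a => Nat.gcd a q = 1) = (range q).filter (fun a => a.Coprime q) := by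
  ext a
  simp only [mem_filter, mem_Icc, mem_range, Nat.Coprime]
  constructor
  · rintro ⟨⟨-, ha⟩, h⟩
    refine ⟨lt_of_le_of_ne ha ?_, h⟩
    rintro rfl
    rw [Nat.gcd_self] at h
    omega
  · rintro ⟨ha, h⟩
    refine ⟨⟨Nat.pos_of_ne_zero ?_, ha.le⟩, h⟩
    rintro rfl
    rw [Nat.gcd_zero_left] at h
    omega

namespace ZMod

variable {q : ℕ} [NeZero q]

lemma sum_val_eq_sum_range {M : Type*} [AddCommMonoid M] (g : ℕ → M) :
    ∑ x : ZMod q, g x.val = ∑ a ∈ range q, g a :=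
  sum_nbij' val Nat.cast (fun x _ => mem_range.2 (val_lt x)) (fun _ _ => mem_univ _)
    (fun x _ => natCast_zmod_val x) (fun _ ha => val_cast_of_lt (mem_range.1 ha)) (fun _ _ => rfl)

lemma sum_ite_isUnit_eq_sum_coprime {M : Type*} [AddCommMonoid M] (g : ℕ → M) :
    ∑ x : ZMod q, (if IsUnit x then g x.val else 0) = ∑ a ∈ range q with a.Coprime q, g a := by
  rw [sum_filter, ← sum_val_eq_sum_range]
  congr! with x
  rw [← isUnit_iff_coprime, natCast_zmod_val]

lemma sum_stdAddChar_mul_intCast (m : ℤ) :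
    ∑ x : ZMod q, stdAddChar (x * (m : ZMod q)) = if (q : ℤ) ∣ m then (q : ℂ) else 0 := by
  rw [AddChar.sum_mulShift _ (isPrimitive_stdAddChar q), ZMod.card]
  simp only [intCast_zmod_eq_zero_iff_dvd]
  split_ifs <;> simp

lemma stdAddChar_mul_intCast (x : ZMod q) (m : ℤ) :
    stdAddChar (x * (m : ZMod q)) = exp (2 * π * I * (x.val / q : ℝ) * m) := by
  have hx : x * (m : ZMod q) = ((x.val * m : ℤ) : ZMod q) := by
    push_cast
    rw [natCast_zmod_val]
  rw [hx, stdAddChar_coe]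
  push_cast
  ring_nf

end ZMod

namespace DirichletCharacter

lemma IsPrimitive.inv {N : ℕ} {χ : DirichletCharacter ℂ N} (hχ : χ.IsPrimitive) :
    χ⁻¹.IsPrimitive := by
  rwa [isPrimitive_def, conductor_inv]

variable {N : ℕ} [NeZero N] {χ : DirichletCharacter ℂ N}

/-- Fourier inversion `𝓕 (𝓕 χ) = N • χ (-·)`, evaluated at `1`. -/
lemma IsPrimitive.gaussSum_mul_gaussSum_inv (hχ : χ.IsPrimitive) :
    gaussSum χ stdAddChar * gaussSum χ⁻¹ stdAddChar = χ (-1) * N := by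
  have h := congrFun (dft_dft (χ : ZMod N → ℂ)) 1
  simp only [funext hχ.fourierTransform_eq_inv_mul_gaussSum] at h
  simp_rw [mul_comm _ (gaussSum χ stdAddChar)] at h
  rw [dft_const_mul, dft_comp_neg] at h
  simp only [hχ.inv.fourierTransform_eq_inv_mul_gaussSum, inv_inv, neg_neg, map_one, one_mul] at h
  rw [h, smul_eq_mul, mul_comm]

lemma star_gaussSum_stdAddChar (χ : DirichletCharacter ℂ N) :
    star (gaussSum χ stdAddChar) = χ (-1) * gaussSum χ⁻¹ stdAddChar := by
  rw [star_gaussSum_eq, AddChar.inv_mulShift, ← Units.coe_neg_one, gaussSum_mulShift_eq, inv_inv]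

lemma IsPrimitive.norm_gaussSum (hχ : χ.IsPrimitive) :
    ‖gaussSum χ stdAddChar‖ = √N := by
  have hsign : χ (-1) * χ (-1) = 1 := by rw [← map_mul, neg_one_mul, neg_neg, map_one]
  have h : gaussSum χ stdAddChar * star (gaussSum χ stdAddChar) = N := by
    rw [star_gaussSum_stdAddChar, mul_left_comm, hχ.gaussSum_mul_gaussSum_inv, ← mul_assoc, hsign,
      one_mul]
  rw [← starRingEnd_apply, Complex.mul_conj] at h
  rw [Complex.norm_def, (by exact_mod_cast h : Complex.normSq _ = (N : ℝ))]

lemma IsPrimitive.mul_gaussSum_inv_eq (hχ : χ.IsPrimitive) (m : ZMod N) :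
    χ m * gaussSum χ⁻¹ stdAddChar = ∑ y, χ⁻¹ y * stdAddChar (y * m) := by
  have h := gaussSum_mulShift_of_isPrimitive stdAddChar hχ.inv m
  rw [inv_inv] at h
  rw [← h, gaussSum]
  simp only [AddChar.mulShift_apply, mul_comm m]

lemma norm_mul_le_ite_isUnit (χ : DirichletCharacter ℂ N) (y : ZMod N) {c : ℝ} (hc : 0 ≤ c) :
    ‖χ y‖ * c ≤ if IsUnit y then c else 0 := by
  split_ifs with hy
  · exact mul_le_of_le_one_left hc (χ.norm_le_one y)
  · rw [χ.map_nonunit hy, norm_zero, zero_mul]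

end DirichletCharacter

noncomputable def expSum (s : Finset ℕ) (g : ℕ → ℂ) (t : ℝ) : ℂ :=
  ∑ k ∈ s, g k * exp (2 * π * I * t * k)

lemma norm_exp_two_pi_I_mul_intCast (t : ℝ) (m : ℤ) : ‖exp (2 * π * I * t * m)‖ = 1 := by
  rw [Complex.norm_exp]
  simp

section

variable {q₀ q₁ : ℕ} [NeZero q₀] [NeZero q₁] {χ : DirichletCharacter ℂ q₁}

lemma ite_dvd_mul_char_eq_sum (hχ : χ.IsPrimitive) (m : ℤ) :
    (if (q₀ : ℤ) ∣ m then (q₀ : ℂ) * (χ m * gaussSum χ⁻¹ stdAddChar) else 0) =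
      ∑ x : ZMod q₀, ∑ y : ZMod q₁,
        χ⁻¹ y * exp (2 * π * I * (x.val / q₀ + y.val / q₁ : ℝ) * m) := by
  have hsplit : ∀ (x : ZMod q₀) (y : ZMod q₁),
      χ⁻¹ y * exp (2 * π * I * (x.val / q₀ + y.val / q₁ : ℝ) * m) =
        stdAddChar (x * (m : ZMod q₀)) * (χ⁻¹ y * stdAddChar (y * (m : ZMod q₁))) := by
    intro x y
    rw [stdAddChar_mul_intCast, stdAddChar_mul_intCast, mul_left_comm, ← Complex.exp_add]
    push_cast
    ring_nf
  simp_rw [hsplit, ← sum_mul_sum, sum_stdAddChar_mul_intCast, ← hχ.mul_gaussSum_inv_eq]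
  split_ifs <;> simp

lemma mul_sum_filter_dvd_mul_char_eq (hχ : χ.IsPrimitive) (s : Finset ℕ) (g : ℕ → ℂ) (b : ℤ) :
    (q₀ : ℂ) * gaussSum χ⁻¹ stdAddChar *
        ∑ k ∈ s.filter (fun k : ℕ => (q₀ : ℤ) ∣ (k + b)), g k * χ ((k + b : ℤ) : ZMod q₁) =
      ∑ x : ZMod q₀, ∑ y : ZMod q₁,
        χ⁻¹ y * exp (2 * π * I * (x.val / q₀ + y.val / q₁ : ℝ) * b) *
          expSum s g (x.val / q₀ + y.val / q₁) := by
  calc _ = ∑ k ∈ s, g k * (if (q₀ : ℤ) ∣ (k + b : ℤ)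
          then (q₀ : ℂ) * (χ ((k + b : ℤ) : ZMod q₁) * gaussSum χ⁻¹ stdAddChar) else 0) := by
        rw [mul_sum, sum_filter]
        refine sum_congr rfl fun k _ => ?_
        split_ifs <;> ring
    _ = ∑ k ∈ s, ∑ x : ZMod q₀, ∑ y : ZMod q₁, g k *
          (χ⁻¹ y * exp (2 * π * I * (x.val / q₀ + y.val / q₁ : ℝ) * (k + b : ℤ))) := by
        simp_rw [ite_dvd_mul_char_eq_sum hχ, mul_sum]
    _ = _ := by
        rw [sum_comm]
        refine sum_congr rfl fun x _ => ?_
        rw [sum_comm]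
        refine sum_congr rfl fun y _ => ?_
        rw [expSum, mul_sum]
        refine sum_congr rfl fun k _ => ?_
        push_cast
        rw [mul_add, Complex.exp_add]
        ring

theorem norm_sum_filter_dvd_mul_char_le (hχ : χ.IsPrimitive) (s : Finset ℕ) (g : ℕ → ℂ)
    (b : ℤ) :
    ‖∑ k ∈ s.filter (fun k : ℕ => (q₀ : ℤ) ∣ (k + b)), g k * χ ((k + b : ℤ) : ZMod q₁)‖ ≤
      (q₀ * √q₁)⁻¹ * ∑ a₀ ∈ range q₀, ∑ a₁ ∈ range q₁ with a₁.Coprime q₁,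
        ‖expSum s g (a₀ / q₀ + a₁ / q₁)‖ := by
  have hτ : ‖(q₀ : ℂ) * gaussSum χ⁻¹ stdAddChar‖ = q₀ * √q₁ := by
    rw [norm_mul, hχ.inv.norm_gaussSum, Complex.norm_natCast]
  have hpos : 0 < (q₀ : ℝ) * √q₁ := by
    have := NeZero.pos q₀
    have := NeZero.pos q₁
    positivity
  rw [le_inv_mul_iff₀ hpos, ← hτ, ← norm_mul, mul_sum_filter_dvd_mul_char_eq hχ]
  calc _ ≤ ∑ x : ZMod q₀, ∑ y : ZMod q₁,
          ‖χ⁻¹ y‖ * ‖expSum s g (x.val / q₀ + y.val / q₁)‖ := by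
        refine norm_sum_le_of_le _ fun x _ => norm_sum_le_of_le _ fun y _ => ?_
        rw [norm_mul, norm_mul, norm_exp_two_pi_I_mul_intCast, mul_one]
    _ ≤ ∑ x : ZMod q₀, ∑ y : ZMod q₁,
          if IsUnit y then ‖expSum s g (x.val / q₀ + y.val / q₁)‖ else 0 := by
        gcongr with x _ y _
        exact χ⁻¹.norm_mul_le_ite_isUnit y (norm_nonneg _)
    _ = ∑ x : ZMod q₀, ∑ a₁ ∈ range q₁ with a₁.Coprime q₁,
          ‖expSum s g (x.val / q₀ + a₁ / q₁)‖ :=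
        sum_congr rfl fun x _ =>
          sum_ite_isUnit_eq_sum_coprime fun a => ‖expSum s g (x.val / q₀ + a / q₁)‖
    _ = _ := sum_val_eq_sum_range fun a₀ =>
        ∑ a₁ ∈ range q₁ with a₁.Coprime q₁, ‖expSum s g (a₀ / q₀ + a₁ / q₁)‖

end

theorem character_twisted_digit_sum_bound_general
    (n : ℕ) (A : Finset ℕ) (α : ℕ → ℕ)
    (q₁ : ℕ) (hq₁ : 1 < q₁)
    (χ : DirichletCharacter ℂ q₁) (hχ : χ.IsPrimitive)
    (q₀ : ℕ) (hq₀ : 1 ≤ q₀) (b : ℤ) :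
    ‖(∑ k ∈ (Finset.range (2 ^ n)).filter (fun k : ℕ => (q₀ : ℤ) ∣ (k + b)),
        (digitIndicator A α k : ℂ) * χ ((k + b : ℤ) : ZMod q₁))‖
      ≤ ((2 ^ n : ℝ) / (q₀ * Real.sqrt q₁)) *
          ∑ a₀ ∈ Finset.range q₀,
            ∑ a₁ ∈ (Finset.Icc 1 q₁).filter (fun a : ℕ => Nat.gcd a q₁ = 1),
              ‖(fhat n A α ((a₀ : ℝ) / q₀ + (a₁ : ℝ) / q₁))‖ := by
  have : NeZero q₀ := ⟨by omega⟩
  have : NeZero q₁ := ⟨by omega⟩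
  have hfhat (t : ℝ) : ‖fhat n A α t‖ =
      (2 ^ n : ℝ)⁻¹ * ‖expSum (range (2 ^ n)) (fun k => digitIndicator A α k) t‖ := by
    rw [fhat, expSum, norm_mul, norm_inv, norm_pow, Complex.norm_two]
  refine (norm_sum_filter_dvd_mul_char_le hχ _ _ b).trans_eq ?_
  rw [Nat.filter_coprime_Icc_eq_filter_coprime_range hq₁]
  simp_rw [hfhat, ← mul_sum, ← mul_assoc]
  congr 1
  field_simp

/-- for an admissible digit datum, odd `q₁ > 1`, a primitive Dirichlet
character `χ (mod q₁)`, `q₀ ≥ 1` with `(q₀, q₁) = 1` and `b ∈ ℤ`,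
`|∑_{k < N, q₀ | k+b} f(k) χ(k+b)| ≤ (N/(q₀ √q₁)) ∑_{a₀<q₀} ∑_{1≤a₁≤q₁, (a₁,q₁)=1}
|\hat f(a₀/q₀ + a₁/q₁)|`. -/
theorem character_twisted_digit_sum_bound
    (n : ℕ) (A : Finset ℕ) (α : ℕ → ℕ) (r : ℕ)
    (hAn : A ⊆ Finset.range n) (h0A : 0 ∈ A) (hα : ∀ j ∈ A, α j ≤ 1) (hα0 : α 0 = 1)
    (hr : A.card = r + 1)
    (q₁ : ℕ) (hq₁ : 1 < q₁) (hq₁odd : Odd q₁)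
    (χ : DirichletCharacter ℂ q₁) (hχ : χ.IsPrimitive)
    (q₀ : ℕ) (hq₀ : 1 ≤ q₀) (hcop : Nat.Coprime q₀ q₁) (b : ℤ) :
    ‖(∑ k ∈ (Finset.range (2 ^ n)).filter (fun k : ℕ => (q₀ : ℤ) ∣ (k + b)),
        (digitIndicator A α k : ℂ) * χ ((k + b : ℤ) : ZMod q₁))‖
      ≤ ((2 ^ n : ℝ) / (q₀ * Real.sqrt q₁)) *
          ∑ a₀ ∈ Finset.range q₀,
            ∑ a₁ ∈ (Finset.Icc 1 q₁).filter (fun a : ℕ => Nat.gcd a q₁ = 1),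
              ‖(fhat n A α ((a₀ : ℝ) / q₀ + (a₁ : ℝ) / q₁))‖ :=
  character_twisted_digit_sum_bound_general n A α q₁ hq₁ χ hχ q₀ hq₀ b
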